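/- arXiv:2112.14421 — 3 statements merged into one kernel-verified Lean document; each statement's English description precedes it below -/
import Mathlib

section
/- For any finite hypergraph $H$ of rank $d \geq 2$, the matching number satisfies $\nu(H) \geq \nu^*(H)/(d-1+\tfrac{1}{d})$. -/
/-!
Take a maximum fractional matching `g` that is an extreme point of the fractional matching
polytope (Krein–Milman applied to the face of maximizers). If every edge had weight in `(0, 1/d)`,
every tight vertex (load `1`) would lie in more than `d` edges, and double counting in a hypergraph
of rank `d` would give fewer tight vertices than edges; but at an extreme point with no zero
coordinate the tight constraints determine `g`, so there are at least as many of them as edges.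
Hence some edge has weight `0`, and can be deleted, or weight at least `1/d`. In the latter case
the edges meeting such an edge `s` carry total weight at most `|s| - (|s| - 1) g(s) ≤ d - 1 + 1/d`,
so putting `s` into the matching and recursing on the edges disjoint from `s` proves
`ν* ≤ (d - 1 + 1/d) ν` by induction on the number of edges.
-/

open Finset Filter Topology

section ExtremePoints

variable {X : Type*} [AddCommGroup X] [Module ℝ X] {A : Set X} {x y : X}

theorem eq_zero_of_mem_extremePoints_of_eventually_add_smul_mem (hx : x ∈ A.extremePoints ℝ)
    (hy : ∀ᶠ t in 𝓝 (0 : ℝ), x + t • y ∈ A) : y = 0 := by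
  have hy' : ∀ᶠ t in 𝓝 (0 : ℝ), x - t • y ∈ A := by
    simpa [sub_eq_add_neg] using (continuous_neg.tendsto' (0 : ℝ) 0 neg_zero).eventually hy
  obtain ⟨t, ⟨hadd, hsub⟩, ht⟩ :=
    (((hy.and hy').filter_mono nhdsWithin_le_nhds).and
      (eventually_mem_nhdsWithin (s := {0}ᶜ) (a := (0 : ℝ)))).exists
  have := hx.2 hadd hsub (mem_openSegment_add_sub x (t • y))
  exact (smul_eq_zero.1 (add_eq_left.1 this)).resolve_left ht

theorem IsCompact.exists_mem_extremePoints_isMaxOn [TopologicalSpace X] [T2Space X]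
    [IsTopologicalAddGroup X] [ContinuousSMul ℝ X] [LocallyConvexSpace ℝ X]
    (hA : IsCompact A) (hne : A.Nonempty) (l : StrongDual ℝ X) :
    ∃ x ∈ A.extremePoints ℝ, IsMaxOn l A x := by
  have hexp : IsExposed ℝ A (l.toExposed A) := ContinuousLinearMap.toExposed.isExposed
  obtain ⟨z, hzA, hz⟩ := hA.exists_isMaxOn hne l.continuous.continuousOn
  obtain ⟨x, hx⟩ := (hexp.isCompact hA).extremePoints_nonempty ⟨z, hzA, hz⟩
  exact ⟨x, hexp.isExtreme.extremePoints_subset_extremePoints hx, isMaxOn_iff.2 hx.1.2⟩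

end ExtremePoints

section Hypergraph

variable {α : Type*} [DecidableEq α]

def IsFractionalMatching (V : Finset α) (E : Finset (Finset α)) (f : Finset α → ℝ) : Prop :=
  (∀ e ∈ E, 0 ≤ f e) ∧ ∀ v ∈ V, ∑ e ∈ E with v ∈ e, f e ≤ 1

theorem IsFractionalMatching.mono {V : Finset α} {E E' : Finset (Finset α)} {f : Finset α → ℝ}
    (hf : IsFractionalMatching V E f) (hE' : E' ⊆ E) : IsFractionalMatching V E' f :=
  ⟨fun e he => hf.1 e (hE' he), fun v hv =>
    (sum_le_sum_of_subset_of_nonneg (filter_subset_filter _ hE')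
      fun e he _ => hf.1 e (mem_of_mem_filter e he)).trans (hf.2 v hv)⟩

section Polytope

variable (V : Finset α) (E : Finset (Finset α))

def vertexLoad (v : α) : (E → ℝ) →ₗ[ℝ] ℝ where
  toFun g := ∑ e : E with v ∈ e.1, g e
  map_add' g h := sum_add_distrib
  map_smul' c g := by simp [mul_sum]

/-- Fractional matchings as points of `E → ℝ`, indexed by the edges themselves so that the ambient
space is finite-dimensional. -/
def fractionalMatchingPolytope : Set (E → ℝ) :=
  {g | (∀ e, 0 ≤ g e) ∧ ∀ v ∈ V, vertexLoad E v g ≤ 1}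

variable {V E}

theorem vertexLoad_restrict (f : Finset α → ℝ) (v : α) :
    vertexLoad E v (fun e => f e) = ∑ e ∈ E with v ∈ e, f e := by
  simp only [vertexLoad, LinearMap.coe_mk, AddHom.coe_mk, sum_filter]
  exact sum_coe_sort E fun e => if v ∈ e then f e else 0

theorem isFractionalMatching_iff_restrict_mem {f : Finset α → ℝ} :
    IsFractionalMatching V E f ↔ (fun e : E => f e) ∈ fractionalMatchingPolytope V E := by
  simp [IsFractionalMatching, fractionalMatchingPolytope, vertexLoad_restrict]

theorem isCompact_fractionalMatchingPolytope (hE : ∀ e ∈ E, ∃ v ∈ V, v ∈ e) :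
    IsCompact (fractionalMatchingPolytope V E) := by
  have hclosed : IsClosed (fractionalMatchingPolytope V E) := by
    simp only [fractionalMatchingPolytope, Set.ofPred_and, Set.ofPred_forall]
    exact (isClosed_iInter fun e => isClosed_le continuous_const (continuous_apply e)).inter
      (isClosed_biInter fun v _ => isClosed_le (vertexLoad E v).continuous_of_finiteDimensional
        continuous_const)
  refine (isCompact_univ_pi fun _ => isCompact_Icc (a := (0 : ℝ)) (b := 1)).of_isClosed_subset
    hclosed fun g hg => Set.mem_univ_pi.2 fun e => ⟨hg.1 e, ?_⟩
  obtain ⟨v, hvV, hve⟩ := hE e e.2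
  refine le_trans ?_ (hg.2 v hvV)
  exact single_le_sum (f := g) (fun e _ => hg.1 e) (mem_filter.2 ⟨mem_univ e, hve⟩)

theorem eventually_add_smul_mem_fractionalMatchingPolytope {g h : E → ℝ}
    (hg : g ∈ fractionalMatchingPolytope V E) (hpos : ∀ e, 0 < g e)
    (hh : ∀ v ∈ V, vertexLoad E v g = 1 → vertexLoad E v h = 0) :
    ∀ᶠ t in 𝓝 (0 : ℝ), g + t • h ∈ fractionalMatchingPolytope V E := by
  have hcoord : ∀ᶠ t in 𝓝 (0 : ℝ), ∀ e, 0 ≤ g e + t * h e := eventually_all.2 fun e =>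
    (continuousAt_const.eventually_lt (by fun_prop) (by simpa using hpos e)).mono
      fun _ ht => ht.le
  have hload : ∀ᶠ t in 𝓝 (0 : ℝ), ∀ v ∈ V, vertexLoad E v g + t * vertexLoad E v h ≤ 1 := by
    refine (eventually_all_finset V).2 fun v hv => ?_
    rcases (hg.2 v hv).lt_or_eq with hlt | heq
    · have hcont : ContinuousAt (fun t : ℝ => vertexLoad E v g + t * vertexLoad E v h) 0 := by
        fun_prop
      exact (hcont.eventually_lt continuousAt_const (by simpa using hlt)).mono fun _ ht => ht.le
    · exact Eventually.of_forall fun t => by simp [heq, hh v hv heq]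
  filter_upwards [hcoord, hload] with t ht₁ ht₂
  exact ⟨fun e => by simpa using ht₁ e, fun v hv => by simpa using ht₂ v hv⟩

/-- A perturbation invisible to the tight vertices keeps a positive point inside the polytope in
both directions, so at an extreme point the loads of the tight vertices separate the edges. -/
theorem card_le_card_tight_of_mem_extremePoints {g : E → ℝ}
    (hg : g ∈ (fractionalMatchingPolytope V E).extremePoints ℝ) (hpos : ∀ e, 0 < g e) :
    #E ≤ #{v ∈ V | vertexLoad E v g = 1} := by
  set T := {v ∈ V | vertexLoad E v g = 1}
  let Φ : (E → ℝ) →ₗ[ℝ] (T → ℝ) := LinearMap.pi fun v => vertexLoad E v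
  have hΦ : Function.Injective Φ := by
    rw [← LinearMap.ker_eq_bot, Submodule.eq_bot_iff]
    intro h hh
    refine eq_zero_of_mem_extremePoints_of_eventually_add_smul_mem hg
      (eventually_add_smul_mem_fractionalMatchingPolytope hg.1 hpos fun v hv hv1 => ?_)
    exact congrFun hh ⟨v, mem_filter.2 ⟨hv, hv1⟩⟩
  simpa using LinearMap.finrank_le_finrank_of_injective hΦ

end Polytope

theorem lt_card_of_sum_eq_one {ι : Type*} {s : Finset ι} {g : ι → ℝ} {d : ℕ}
    (hs : ∑ i ∈ s, g i = 1) (hg : ∀ i ∈ s, g i < 1 / d) : d < #s := by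
  have hne : s.Nonempty := nonempty_of_sum_ne_zero (f := g) (by rw [hs]; exact one_ne_zero)
  have hlt : 1 < (#s : ℝ) * (1 / d) := by simpa [hs] using sum_lt_sum_of_nonempty hne hg
  rcases d.eq_zero_or_pos with rfl | hd
  · norm_num at hlt
  · rw [mul_one_div, one_lt_div (by positivity)] at hlt
    exact_mod_cast hlt

theorem sum_sum_filter_mem_eq_sum_card_inter_mul (s : Finset α) (E : Finset (Finset α))
    (g : Finset α → ℝ) : ∑ v ∈ s, ∑ e ∈ E with v ∈ e, g e = ∑ e ∈ E, #(s ∩ e) * g e := by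
  simp_rw [sum_filter]
  rw [sum_comm]
  refine sum_congr rfl fun e _ => ?_
  rw [← sum_filter, sum_const, nsmul_eq_mul, filter_mem_eq_inter]

theorem sub_mul_le_of_one_div_le {m d : ℕ} {t : ℝ} (hm : 1 ≤ m) (hmd : m ≤ d) (ht : 1 / d ≤ t) :
    m - (m - 1) * t ≤ d - 1 + 1 / d := by
  have hm' : (1 : ℝ) ≤ m := by exact_mod_cast hm
  have hmd' : (m : ℝ) ≤ d := by exact_mod_cast hmd
  have hd : (1 : ℝ) / d ≤ 1 := by rw [div_le_one (by linarith)]; linarith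
  have hd' : (d : ℝ) * (1 / d) = 1 := mul_one_div_cancel (by linarith)
  nlinarith

theorem IsFractionalMatching.sum_filter_not_disjoint_le {V s : Finset α} {E : Finset (Finset α)}
    {g : Finset α → ℝ} {d : ℕ} (hg : IsFractionalMatching V E g) (hs : s ∈ E) (hsV : s ⊆ V)
    (hsne : s.Nonempty) (hsd : #s ≤ d) (hgs : 1 / d ≤ g s) :
    ∑ e ∈ E with ¬Disjoint e s, g e ≤ d - 1 + 1 / d := by
  have hloads : ∑ e ∈ E, #(s ∩ e) * g e ≤ #s := by
    rw [← sum_sum_filter_mem_eq_sum_card_inter_mul]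
    simpa using sum_le_sum fun v hv => hg.2 v (hsV hv)
  have hmeets : ∑ e ∈ E with ¬Disjoint e s, #(s ∩ e) * g e ≤ ∑ e ∈ E, #(s ∩ e) * g e :=
    sum_le_sum_of_subset_of_nonneg (filter_subset _ E) fun e he _ => by
      have := hg.1 e he
      positivity
  have hexcess : (#s - 1) * g s ≤ ∑ e ∈ E with ¬Disjoint e s, (#(s ∩ e) - 1) * g e := by
    have hmem : s ∈ {e ∈ E | ¬Disjoint e s} := mem_filter.2 ⟨hs, by simpa using hsne.ne_empty⟩
    refine (le_of_eq (by rw [inter_self])).trans (single_le_sum (fun e he => ?_) hmem)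
    obtain ⟨heE, hes⟩ := mem_filter.1 he
    have : (1 : ℝ) ≤ #(s ∩ e) := by
      exact_mod_cast (not_disjoint_iff_nonempty_inter.1 fun h => hes h.symm).card_pos
    exact mul_nonneg (by linarith) (hg.1 e heE)
  calc ∑ e ∈ E with ¬Disjoint e s, g e
      = ∑ e ∈ E with ¬Disjoint e s, #(s ∩ e) * g e
        - ∑ e ∈ E with ¬Disjoint e s, (#(s ∩ e) - 1) * g e := by
        rw [← sum_sub_distrib]; exact sum_congr rfl fun e _ => by ring
    _ ≤ #s - (#s - 1) * g s := by linarith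
    _ ≤ d - 1 + 1 / d := sub_mul_le_of_one_div_le hsne.card_pos hsd hgs

theorem card_mul_succ_le_card_mul {T : Finset α} {E : Finset (Finset α)} {d : ℕ}
    (hE : ∀ e ∈ E, #e ≤ d) (hT : ∀ v ∈ T, d < #{e ∈ E | v ∈ e}) : #T * (d + 1) ≤ #E * d :=
  card_mul_le_card_mul (fun v e => v ∈ e) (fun v hv => hT v hv)
    fun e he => (card_le_card fun _ hv => (mem_filter.1 hv).2).trans (hE e he)

theorem exists_isFractionalMatching_eq_zero_or_one_div_le {V : Finset α}
    {E : Finset (Finset α)} {f : Finset α → ℝ} {d : ℕ}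
    (hE : ∀ e ∈ E, e ⊆ V ∧ e.Nonempty ∧ #e ≤ d) (hEne : E.Nonempty)
    (hf : IsFractionalMatching V E f) :
    ∃ g, IsFractionalMatching V E g ∧ ∑ e ∈ E, f e ≤ ∑ e ∈ E, g e ∧
      ∃ e ∈ E, g e = 0 ∨ 1 / d ≤ g e := by
  have hcompact : IsCompact (fractionalMatchingPolytope V E) :=
    isCompact_fractionalMatchingPolytope fun e he =>
      (hE e he).2.1.imp fun v hv => ⟨(hE e he).1 hv, hv⟩
  obtain ⟨g, hgext, hgmax⟩ := hcompact.exists_mem_extremePoints_isMaxOn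
    ⟨_, isFractionalMatching_iff_restrict_mem.1 hf⟩ (∑ e, ContinuousLinearMap.proj e)
  let G : Finset α → ℝ := fun s => if h : s ∈ E then g ⟨s, h⟩ else 0
  have hG : (fun e : E => G e) = g := funext fun e => dif_pos e.2
  have hGfrac : IsFractionalMatching V E G :=
    isFractionalMatching_iff_restrict_mem.2 (hG ▸ hgext.1)
  refine ⟨G, hGfrac, ?_, ?_⟩
  · rw [← sum_coe_sort E f, ← sum_coe_sort E G, hG]
    simpa using hgmax (isFractionalMatching_iff_restrict_mem.1 hf)
  by_contra! hsmall
  have hpos : ∀ e, 0 < g e := fun e => by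
    rw [← hG]; exact (hGfrac.1 e e.2).lt_of_ne' (hsmall e e.2).1
  set T := {v ∈ V | vertexLoad E v g = 1}
  have htight : #E ≤ #T := card_le_card_tight_of_mem_extremePoints hgext hpos
  have hdeg : ∀ v ∈ T, d < #{e ∈ E | v ∈ e} := fun v hv =>
    lt_card_of_sum_eq_one (by simpa [← hG, vertexLoad_restrict] using (mem_filter.1 hv).2)
      fun e he => (hsmall e (mem_filter.1 he).1).2
  have hcount := card_mul_succ_le_card_mul (fun e he => (hE e he).2.2) hdeg
  have hE0 : #E = 0 := by nlinarith
  exact hEne.card_pos.ne' hE0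

theorem exists_matching_sum_le_mul_card {V : Finset α} {E : Finset (Finset α)}
    {f : Finset α → ℝ} {d : ℕ} (hE : ∀ e ∈ E, e ⊆ V ∧ e.Nonempty ∧ #e ≤ d)
    (hf : IsFractionalMatching V E f) :
    ∃ M ⊆ E, (M : Set (Finset α)).Pairwise Disjoint ∧
      ∑ e ∈ E, f e ≤ ((d : ℝ) - 1 + 1 / d) * #M := by
  induction E using Finset.strongInduction generalizing f with
  | H E ih =>
  rcases E.eq_empty_or_nonempty with rfl | hEne
  · exact ⟨∅, by simp⟩
  obtain ⟨g, hg, hfg, s, hs, hgs⟩ := exists_isFractionalMatching_eq_zero_or_one_div_le hE hEne hf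
  rcases hgs with hgs | hgs
  · obtain ⟨M, hME, hM, hgM⟩ := ih (E.erase s) (erase_ssubset hs)
      (fun e he => hE e (mem_of_mem_erase he)) (hg.mono (erase_subset s E))
    refine ⟨M, hME.trans (erase_subset s E), hM, ?_⟩
    calc ∑ e ∈ E, f e ≤ ∑ e ∈ E, g e := hfg
      _ = ∑ e ∈ E.erase s, g e := by rw [← sum_erase_add E g hs, hgs, add_zero]
      _ ≤ _ := hgM
  · have hsne := (hE s hs).2.1
    have hsnot : s ∉ {e ∈ E | Disjoint e s} := fun h =>
      hsne.ne_empty (disjoint_self_iff_empty _ |>.1 (mem_filter.1 h).2)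
    obtain ⟨M, hME, hM, hgM⟩ := ih {e ∈ E | Disjoint e s}
      (filter_ssubset.2 ⟨s, hs, fun h => hsnot (mem_filter.2 ⟨hs, h⟩)⟩)
      (fun e he => hE e (mem_of_mem_filter e he)) (hg.mono (filter_subset _ E))
    refine ⟨insert s M, insert_subset hs (hME.trans (filter_subset _ E)), ?_, ?_⟩
    · rw [coe_insert, Set.pairwise_insert_of_symm]
      exact ⟨hM, fun e he _ => ((mem_filter.1 (hME he)).2).symm⟩
    calc ∑ e ∈ E, f e ≤ ∑ e ∈ E, g e := hfg
      _ = ∑ e ∈ E with Disjoint e s, g e + ∑ e ∈ E with ¬Disjoint e s, g e :=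
        (sum_filter_add_sum_filter_not E _ g).symm
      _ ≤ ((d : ℝ) - 1 + 1 / d) * #M + ((d : ℝ) - 1 + 1 / d) :=
        add_le_add hgM (hg.sum_filter_not_disjoint_le hs (hE s hs).1 hsne (hE s hs).2.2 hgs)
      _ = ((d : ℝ) - 1 + 1 / d) * #(insert s M) := by
        rw [card_insert_of_notMem fun h => hsnot (hME h)]
        push_cast
        ring

end Hypergraph

/-- Füredi's theorem: in a hypergraph of rank `d ≥ 2`,
`ν(H) ≥ ν*(H) / (d - 1 + 1/d)`. -/
theorem furedi_rank {α : Type*} [DecidableEq α]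
    (V : Finset α) (E : Finset (Finset α)) (d : ℕ) (hd : 2 ≤ d)
    (hE : ∀ e ∈ E, e ⊆ V ∧ e.Nonempty ∧ e.card ≤ d)
    (f : Finset α → ℝ) (hf0 : ∀ e ∈ E, 0 ≤ f e)
    (hfm : ∀ v ∈ V, ∑ e ∈ E.filter (fun e => v ∈ e), f e ≤ 1) :
    ∃ M : Finset (Finset α), M ⊆ E ∧
      (↑M : Set (Finset α)).Pairwise (fun a b => Disjoint a b) ∧
      (∑ e ∈ E, f e) / ((d : ℝ) - 1 + 1 / d) ≤ M.card := by
  obtain ⟨M, hME, hM, hfM⟩ := exists_matching_sum_le_mul_card hE ⟨hf0, hfm⟩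
  have hd' : (1 : ℝ) ≤ d := by exact_mod_cast one_le_two.trans hd
  have hbound : 0 ≤ (d : ℝ) - 1 + 1 / d := by positivity
  exact ⟨M, hME, hM, div_le_of_le_mul₀ hbound M.card.cast_nonneg (by linarith)⟩
end

section
/- For any finite $d$-partite hypergraph $H$ with $d \geq 2$, the matching number satisfies $\nu(H) \geq \nu^*(H)/(d-1)$. -/
/-!
If a fractional matching `g` gives an edge `e` weight at least `1 / (d - 1)`, the edges meeting
`e` carry total weight at most `d - (d - 1) g(e) ≤ d - 1`: the `d` vertices of `e` have load at
most `1`, and `e` itself is counted `d` times. So `e` joins the matching, and we recurse on the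
edges disjoint from `e`.

Such a heavy edge exists once `f` is pushed to a basic fractional matching, by moving along kernel
directions until an edge weight vanishes or a vertex becomes tight. At a basic matching with all
weights below `1 / (d - 1)`, every tight vertex lies in at least `d` support edges; double counting
against the linear independence of the incidence vectors on the tight vertices puts every support
edge inside the tight set, with as many support edges as tight vertices. The incidence vectors would
then span, yet all of them are orthogonal to the difference of the indicators of two colour classes.
-/

open Finset

lemma exists_pos_forall_nonneg_add_mul_eq_zero {ι : Type*} (K : Finset ι) (a b : ι → ℝ)
    (ha : ∀ k ∈ K, 0 ≤ a k) (hab : ∀ k ∈ K, b k < 0 → 0 < a k)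
    (hb : ∃ k ∈ K, b k < 0) :
    ∃ t > 0, (∀ k ∈ K, 0 ≤ a k + t * b k) ∧
      ∃ k ∈ K, b k < 0 ∧ a k + t * b k = 0 := by
  obtain ⟨k₀, hk₀, hmin⟩ := exists_min_image {k ∈ K | b k < 0} (fun k => a k / -b k)
    (by simpa [Finset.Nonempty] using hb)
  rw [mem_filter] at hk₀
  refine ⟨a k₀ / -b k₀, div_pos (hab _ hk₀.1 hk₀.2) (neg_pos.2 hk₀.2), fun k hk => ?_,
    k₀, hk₀.1, hk₀.2, by field_simp [hk₀.2.ne]; ring⟩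
  rcases le_or_gt 0 (b k) with hbk | hbk
  · have := div_nonneg (ha k₀ hk₀.1) (neg_nonneg.2 hk₀.2.le)
    nlinarith [ha k hk]
  · have := hmin k (mem_filter.2 ⟨hk, hbk⟩)
    rw [le_div_iff₀ (neg_pos.2 hbk)] at this
    linarith

lemma le_card_of_sum_eq_one {ι : Type*} {s : Finset ι} {x : ι → ℝ} {d : ℕ}
    (hx : ∀ i ∈ s, (d - 1 : ℝ) * x i < 1) (hs : ∑ i ∈ s, x i = 1) : d ≤ #s := by
  have hne : s.Nonempty := nonempty_of_sum_ne_zero (by rw [hs]; exact one_ne_zero)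
  have : (d - 1 : ℝ) < #s :=
    calc (d - 1 : ℝ) = ∑ i ∈ s, (d - 1 : ℝ) * x i := by rw [← mul_sum, hs, mul_one]
      _ < ∑ i ∈ s, 1 := sum_lt_sum_of_nonempty hne hx
      _ = #s := by simp
  have : (d : ℝ) < #s + 1 := by linarith
  exact Nat.lt_succ_iff.1 (by exact_mod_cast this)

namespace FinsetHypergraph

variable {α : Type*}

def IsPartite {d : ℕ} (V : Finset α) (E : Finset (Finset α)) (c : α → Fin d) : Prop :=
  ∀ e ∈ E, e ⊆ V ∧ ∀ j, #{v ∈ e | c v = j} = 1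

section Partite

variable {d : ℕ} {V : Finset α} {E E' : Finset (Finset α)} {c : α → Fin d}

lemma IsPartite.card_eq (hE : IsPartite V E c) {e : Finset α} (he : e ∈ E) : #e = d := by
  rw [card_eq_sum_card_fiberwise (f := c) (t := univ) fun _ _ => mem_univ _]
  simp [(hE e he).2]

lemma IsPartite.mono (hE : IsPartite V E c) (h : E' ⊆ E) : IsPartite V E' c :=
  fun e he => hE e (h he)

end Partite

variable [DecidableEq α]

section DoubleCounting

variable {S : Finset (Finset α)} {T : Finset α} {d : ℕ}

lemma card_le_card_of_le_degree (hd : 0 < d) (hS : ∀ e ∈ S, #e ≤ d)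
    (hT : ∀ v ∈ T, d ≤ #{e ∈ S | v ∈ e}) : #T ≤ #S :=
  Nat.le_of_mul_le_mul_right (card_mul_le_card_mul' (fun e v => v ∈ e) hT
    fun e he => (card_le_card fun _ hv => (mem_filter.1 hv).2).trans (hS e he)) hd

lemma subset_of_card_le_of_le_degree (hS : ∀ e ∈ S, #e ≤ d)
    (hT : ∀ v ∈ T, d ≤ #{e ∈ S | v ∈ e}) (hST : #S ≤ #T) : ∀ e ∈ S, e ⊆ T := by
  have hle : ∀ e ∈ S, #{v ∈ T | v ∈ e} ≤ #e :=
    fun e _ => card_le_card fun v hv => (mem_filter.1 hv).2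
  have hsum : ∑ e ∈ S, #{v ∈ T | v ∈ e} = ∑ e ∈ S, #e := by
    refine le_antisymm (sum_le_sum hle) ?_
    calc ∑ e ∈ S, #e ≤ #S * d := by simpa using sum_le_card_nsmul S _ _ hS
      _ ≤ #T * d := by gcongr
      _ ≤ ∑ v ∈ T, #{e ∈ S | v ∈ e} := by simpa using card_nsmul_le_sum T _ _ hT
      _ = ∑ e ∈ S, #{v ∈ T | v ∈ e} :=
        (sum_card_bipartiteAbove_eq_sum_card_bipartiteBelow (fun e v => v ∈ e)).symm
  intro e he
  have heq := eq_of_subset_of_card_le (fun v hv => (mem_filter.1 hv).2)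
    ((sum_eq_sum_iff_of_le hle).1 hsum e he).ge
  exact fun _ hv => (mem_filter.1 (heq ▸ hv)).1

end DoubleCounting

def load (E : Finset (Finset α)) (f : Finset α → ℝ) (v : α) : ℝ :=
  ∑ e ∈ E with v ∈ e, f e

structure IsFractionalMatching (V : Finset α) (E : Finset (Finset α)) (f : Finset α → ℝ) :
    Prop where
  nonneg : ∀ e ∈ E, 0 ≤ f e
  load_le_one : ∀ v ∈ V, load E f v ≤ 1

noncomputable def defect (V : Finset α) (E : Finset (Finset α)) (f : Finset α → ℝ) : ℕ :=
  #{e ∈ E | f e ≠ 0} + #{v ∈ V | load E f v ≠ 1}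

def incidence (T e : Finset α) : T → ℝ := fun v => if (v : α) ∈ e then 1 else 0

variable {V : Finset α} {E E' : Finset (Finset α)} {f g : Finset α → ℝ}

lemma load_add_mul (E : Finset (Finset α)) (f g : Finset α → ℝ) (t : ℝ) (v : α) :
    load E (fun e => f e + t * g e) v = load E f v + t * load E g v := by
  simp only [load, sum_add_distrib, mul_sum]

lemma load_ite_eq (E : Finset (Finset α)) (f h : Finset α → ℝ) (v : α) :
    load E (fun e => if f e = 0 then 0 else h e) v =
      ∑ e ∈ {e ∈ E | f e ≠ 0} with v ∈ e, h e := by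
  rw [load, sum_ite, sum_const_zero, zero_add, filter_filter, filter_filter]
  exact sum_congr (by ext; simp [and_comm]) fun _ _ => rfl

lemma sum_load_eq (E : Finset (Finset α)) (f : Finset α → ℝ) (s : Finset α) :
    ∑ v ∈ s, load E f v = ∑ e ∈ E, #(s ∩ e) * f e := by
  simp only [load, sum_filter]
  rw [sum_comm]
  simp [sum_ite_mem]

lemma IsFractionalMatching.mono (hf : IsFractionalMatching V E f) (h : E' ⊆ E) :
    IsFractionalMatching V E' f where
  nonneg e he := hf.nonneg e (h he)
  load_le_one v hv := (sum_le_sum_of_subset_of_nonneg (filter_subset_filter _ h)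
    fun e he _ => hf.nonneg e (mem_filter.1 he).1).trans (hf.load_le_one v hv)

lemma IsFractionalMatching.sum_not_disjoint_add_le (hf : IsFractionalMatching V E f)
    {e₀ : Finset α} (he₀ : e₀ ∈ E) (he₀V : e₀ ⊆ V) (he₀ne : e₀.Nonempty) :
    ∑ e ∈ E with ¬Disjoint e e₀, f e + (#e₀ - 1) * f e₀ ≤ #e₀ := by
  have he₀N : e₀ ∈ {e ∈ E | ¬Disjoint e e₀} := by simpa [he₀] using he₀ne.ne_empty
  calc ∑ e ∈ E with ¬Disjoint e e₀, f e + (#e₀ - 1) * f e₀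
      ≤ ∑ e ∈ E with ¬Disjoint e e₀, (f e + (#(e₀ ∩ e) - 1) * f e) := by
        rw [sum_add_distrib]
        gcongr
        have h := single_le_sum (f := fun e => (#(e₀ ∩ e) - 1 : ℝ) * f e)
          (fun e he => ?_) he₀N
        · simpa only [inter_self] using h
        rw [mem_filter, not_disjoint_iff_nonempty_inter, inter_comm] at he
        have : (1 : ℝ) ≤ #(e₀ ∩ e) := by exact_mod_cast he.2.card_pos
        exact mul_nonneg (by linarith) (hf.nonneg e he.1)
    _ = ∑ e ∈ E, #(e₀ ∩ e) * f e := by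
        rw [sum_filter]
        refine sum_congr rfl fun e _ => ?_
        split_ifs with h
        · rw [disjoint_iff_inter_eq_empty, inter_comm] at h
          simp [h]
        · ring
    _ = ∑ v ∈ e₀, load E f v := (sum_load_eq E f e₀).symm
    _ ≤ ∑ v ∈ e₀, 1 := sum_le_sum fun v hv => hf.load_le_one v (he₀V hv)
    _ = #e₀ := by simp

lemma defect_lt (hsupp : ∀ e ∈ E, f e = 0 → g e = 0)
    (htight : ∀ v ∈ V, load E f v = 1 → load E g v = 1)
    (h : (∃ e ∈ E, f e ≠ 0 ∧ g e = 0) ∨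
      ∃ v ∈ V, load E f v ≠ 1 ∧ load E g v = 1) :
    defect V E g < defect V E f := by
  have hE : {e ∈ E | g e ≠ 0} ⊆ {e ∈ E | f e ≠ 0} :=
    monotone_filter_right _ fun e he => mt (hsupp e he)
  have hV : {v ∈ V | load E g v ≠ 1} ⊆ {v ∈ V | load E f v ≠ 1} :=
    monotone_filter_right _ fun v hv => mt (htight v hv)
  unfold defect
  rcases h with ⟨e, he, hfe, hge⟩ | ⟨v, hv, hfv, hgv⟩
  · have := card_lt_card <| (ssubset_iff_of_subset hE).2 ⟨e, by simp [he, hfe], by simp [hge]⟩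
    have := card_le_card hV
    omega
  · have := card_lt_card <| (ssubset_iff_of_subset hV).2 ⟨v, by simp [hv, hfv], by simp [hgv]⟩
    have := card_le_card hE
    omega

lemma exists_neg_or_load_pos (hEV : ∀ e ∈ E, e ⊆ V) (hne : ∀ e ∈ E, e.Nonempty)
    (hf : ∃ e ∈ E, f e ≠ 0) : (∃ e ∈ E, f e < 0) ∨ ∃ v ∈ V, 0 < load E f v := by
  refine or_iff_not_imp_left.2 fun hneg => ?_
  push Not at hneg
  obtain ⟨e, he, hfe⟩ := hf
  obtain ⟨v, hv⟩ := hne e he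
  exact ⟨v, hEV e he hv, ((hneg e he).lt_of_ne' hfe).trans_le <|
    single_le_sum (fun e he => hneg e (mem_filter.1 he).1) (mem_filter.2 ⟨he, hv⟩)⟩

lemma IsFractionalMatching.exists_add_mul_boundary (hf : IsFractionalMatching V E f)
    (hEV : ∀ e ∈ E, e ⊆ V) (hne : ∀ e ∈ E, e.Nonempty) {l : Finset α → ℝ}
    (hl_supp : ∀ e ∈ E, f e = 0 → l e = 0)
    (hl_tight : ∀ v ∈ V, load E f v = 1 → load E l v = 0) (hl_ne : ∃ e ∈ E, l e ≠ 0) :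
    ∃ t > 0, IsFractionalMatching V E (fun e => f e + t * l e) ∧
      ((∃ e ∈ E, f e ≠ 0 ∧ f e + t * l e = 0) ∨
        ∃ v ∈ V, load E f v ≠ 1 ∧ load E (fun e => f e + t * l e) v = 1) := by
  -- The constraints, indexed by `E.disjSum V`, are the edge weights and the vertex slacks.
  have ha : ∀ k ∈ E.disjSum V, 0 ≤ Sum.elim f (fun v => 1 - load E f v) k := by
    rintro (e | v) hk
    · exact hf.nonneg e (inl_mem_disjSum.1 hk)
    · simpa using hf.load_le_one v (inr_mem_disjSum.1 hk)
  have hab : ∀ k ∈ E.disjSum V, Sum.elim l (fun v => -load E l v) k < 0 →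
      0 < Sum.elim f (fun v => 1 - load E f v) k := by
    rintro (e | v) hk hbk
    · exact (hf.nonneg e (inl_mem_disjSum.1 hk)).lt_of_ne'
        fun hfe => hbk.ne (hl_supp e (inl_mem_disjSum.1 hk) hfe)
    · have hv := inr_mem_disjSum.1 hk
      refine sub_pos.2 ((hf.load_le_one v hv).lt_of_ne fun hfv => ?_)
      simp [hl_tight v hv hfv] at hbk
  have hb : ∃ k ∈ E.disjSum V, Sum.elim l (fun v => -load E l v) k < 0 := by
    rcases exists_neg_or_load_pos hEV hne hl_ne with ⟨e, he, hle⟩ | ⟨v, hv, hlv⟩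
    · exact ⟨.inl e, inl_mem_disjSum.2 he, hle⟩
    · exact ⟨.inr v, inr_mem_disjSum.2 hv, neg_neg_of_pos hlv⟩
  obtain ⟨t, ht, hstep, k, hk, hbk, hk0⟩ :=
    exists_pos_forall_nonneg_add_mul_eq_zero _ _ _ ha hab hb
  refine ⟨t, ht, ⟨fun e he => hstep (.inl e) (inl_mem_disjSum.2 he), fun v hv => ?_⟩, ?_⟩
  · have := hstep (.inr v) (inr_mem_disjSum.2 hv)
    simp only [Sum.elim_inr] at this
    rw [load_add_mul]
    linarith
  rcases k with e | v
  · have he := inl_mem_disjSum.1 hk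
    exact .inl ⟨e, he, fun hfe => hbk.ne (hl_supp e he hfe), hk0⟩
  · have hv := inr_mem_disjSum.1 hk
    refine .inr ⟨v, hv, fun hfv => ?_, ?_⟩
    · simp [hl_tight v hv hfv] at hbk
    · simp only [Sum.elim_inr] at hk0
      rw [load_add_mul]
      linarith

lemma IsFractionalMatching.exists_defect_lt (hf : IsFractionalMatching V E f)
    (hEV : ∀ e ∈ E, e ⊆ V) (hne : ∀ e ∈ E, e.Nonempty) {l : Finset α → ℝ}
    (hl_supp : ∀ e ∈ E, f e = 0 → l e = 0)
    (hl_tight : ∀ v ∈ V, load E f v = 1 → load E l v = 0) (hl_ne : ∃ e ∈ E, l e ≠ 0) :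
    ∃ g, IsFractionalMatching V E g ∧ ∑ e ∈ E, f e ≤ ∑ e ∈ E, g e ∧
      defect V E g < defect V E f := by
  wlog hl_sum : 0 ≤ ∑ e ∈ E, l e generalizing l
  · refine this (l := -l) (by simpa using hl_supp) (fun v hv hfv => ?_) (by simpa using hl_ne)
      (by simp only [Pi.neg_apply, sum_neg_distrib]; linarith)
    simpa [load, sum_neg_distrib] using hl_tight v hv hfv
  obtain ⟨t, ht, hg, hboundary⟩ := hf.exists_add_mul_boundary hEV hne hl_supp hl_tight hl_ne
  refine ⟨_, hg, ?_, defect_lt (fun e he hfe => ?_) (fun v hv hfv => ?_) hboundary⟩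
  · rw [sum_add_distrib, ← mul_sum]
    nlinarith
  · simp [hfe, hl_supp e he hfe]
  · rw [load_add_mul, hfv, hl_tight v hv hfv, mul_zero, add_zero]

section Partite

variable {d : ℕ} {c : α → Fin d}

lemma IsPartite.span_incidence_ne_top (hE : IsPartite V E c) (hd : 2 ≤ d)
    {S : Finset (Finset α)} (hSE : S ⊆ E) (hS : S.Nonempty) {T : Finset α}
    (hST : ∀ e ∈ S, e ⊆ T) :
    Submodule.span ℝ (Set.range fun e : (S : Set (Finset α)) => incidence T e) ≠ ⊤ := by
  set j₀ : Fin d := ⟨0, by omega⟩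
  set j₁ : Fin d := ⟨1, by omega⟩
  let u : T → ℝ := fun v => (if c v = j₀ then 1 else 0) - (if c v = j₁ then 1 else 0)
  have hu : ∀ e ∈ S, ∑ v : T, incidence T e v * u v = 0 := by
    intro e he
    simp only [incidence, u]
    rw [sum_coe_sort T fun v => (if v ∈ e then 1 else 0) *
      ((if c v = j₀ then 1 else 0) - (if c v = j₁ then 1 else 0))]
    simp only [ite_mul, one_mul, zero_mul]
    rw [sum_ite_mem, inter_eq_right.2 (hST e he), sum_sub_distrib, sum_boole, sum_boole]
    simp [(hE e (hSE he)).2]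
  obtain ⟨e, he⟩ := hS
  obtain ⟨v₀, hv₀⟩ := card_eq_one.1 ((hE e (hSE he)).2 j₀)
  have hv₀e : v₀ ∈ e ∧ c v₀ = j₀ := mem_filter.1 (hv₀ ▸ mem_singleton_self v₀)
  intro htop
  have hker : Submodule.span ℝ (Set.range fun e : (S : Set (Finset α)) => incidence T e) ≤
      LinearMap.ker (Fintype.linearCombination ℝ u) :=
    Submodule.span_le.2 <| Set.range_subset_iff.2 fun e => by
      simpa [Fintype.linearCombination_apply] using hu e e.2
  have := hker (htop ▸ Submodule.mem_top (x := Pi.single (⟨v₀, hST e he hv₀e.1⟩ : T) 1))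
  rw [LinearMap.mem_ker, Fintype.linearCombination_apply_single, one_smul] at this
  simp [u, hv₀e.2, j₀, j₁] at this

lemma IsPartite.exists_kernel_direction (hE : IsPartite V E c) (hd : 2 ≤ d)
    (hpos : ∃ e ∈ E, f e ≠ 0) (hlight : ∀ e ∈ E, (d - 1 : ℝ) * f e < 1) :
    ∃ l : Finset α → ℝ, (∀ e ∈ E, f e = 0 → l e = 0) ∧
      (∀ v ∈ V, load E f v = 1 → load E l v = 0) ∧ ∃ e ∈ E, l e ≠ 0 := by
  set S := {e ∈ E | f e ≠ 0}
  set T := {v ∈ V | load E f v = 1}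
  have hdep : ¬LinearIndepOn ℝ (incidence T) (S : Set (Finset α)) := by
    intro hli
    have hcard : ∀ e ∈ S, #e ≤ d := fun e he => (hE.card_eq (mem_filter.1 he).1).le
    have hdeg : ∀ v ∈ T, d ≤ #{e ∈ S | v ∈ e} := by
      intro v hv
      refine le_card_of_sum_eq_one
        (fun e he => hlight e (mem_filter.1 (mem_filter.1 he).1).1) ?_
      rw [← load_ite_eq, ← (mem_filter.1 hv).2]
      exact sum_congr rfl fun e _ => ite_eq_right_iff.2 fun h => h.symm
    have hST : #S ≤ #T := by simpa using hli.fintype_card_le_finrank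
    have hTS : #T ≤ #S := card_le_card_of_le_degree (by omega) hcard hdeg
    refine hE.span_incidence_ne_top hd (filter_subset _ _)
      (by simpa [Finset.Nonempty, S] using hpos) (subset_of_card_le_of_le_degree hcard hdeg hST) ?_
    exact hli.span_eq_top_of_card_eq_finrank' (by simp; omega)
  obtain ⟨l, hl, e, he, hle⟩ := not_linearIndepOn_finset_iff.1 hdep
  refine ⟨fun e => if f e = 0 then 0 else l e, fun e _ he => if_pos he, fun v hv hvT => ?_,
    e, (mem_filter.1 he).1, by simpa [(mem_filter.1 he).2] using hle⟩
  have := congrFun hl ⟨v, mem_filter.2 ⟨hv, hvT⟩⟩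
  simp only [Finset.sum_apply, Pi.smul_apply, incidence, smul_eq_mul, mul_ite, mul_one, mul_zero,
    Pi.zero_apply] at this
  rwa [load_ite_eq, sum_filter]

lemma IsPartite.exists_heavy_edge (hE : IsPartite V E c) (hd : 2 ≤ d)
    (hf : IsFractionalMatching V E f) (hpos : 0 < ∑ e ∈ E, f e) :
    ∃ g, IsFractionalMatching V E g ∧ ∑ e ∈ E, f e ≤ ∑ e ∈ E, g e ∧
      ∃ e ∈ E, 1 ≤ (d - 1 : ℝ) * g e := by
  by_contra! hlight
  suffices ∀ n, ∀ g, IsFractionalMatching V E g → ∑ e ∈ E, f e ≤ ∑ e ∈ E, g e →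
      defect V E g ≠ n from this _ f hf le_rfl rfl
  intro n
  induction n using Nat.strong_induction_on with
  | _ n ih =>
  intro g hg hfg hn
  have hsupp : ∃ e ∈ E, g e ≠ 0 := by
    by_contra! h
    rw [sum_eq_zero h] at hfg
    linarith
  obtain ⟨l, hl_supp, hl_tight, hl_ne⟩ := hE.exists_kernel_direction hd hsupp (hlight g hg hfg)
  obtain ⟨g', hg', hgg', hlt⟩ := hg.exists_defect_lt (fun e he => (hE e he).1)
    (fun e he => card_pos.1 (by rw [hE.card_eq he]; omega)) hl_supp hl_tight hl_ne
  exact ih _ (hn ▸ hlt) g' hg' (hfg.trans hgg') rfl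

lemma IsPartite.exists_matching (hE : IsPartite V E c) (hd : 2 ≤ d)
    (hf : IsFractionalMatching V E f) :
    ∃ M ⊆ E, (M : Set (Finset α)).Pairwise Disjoint ∧
      ∑ e ∈ E, f e ≤ (d - 1 : ℝ) * #M := by
  induction E using Finset.strongInduction generalizing f with
  | H E ih =>
  rcases le_or_gt (∑ e ∈ E, f e) 0 with hnonpos | hpos
  · exact ⟨∅, empty_subset _, by simp, by simpa using hnonpos⟩
  obtain ⟨g, hg, hfg, e₀, he₀, hheavy⟩ := hE.exists_heavy_edge hd hf hpos
  have he₀ne : e₀.Nonempty := card_pos.1 (by rw [hE.card_eq he₀]; omega)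
  have hE' : {e ∈ E | Disjoint e e₀} ⊂ E :=
    (ssubset_iff_of_subset (filter_subset _ _)).2 ⟨e₀, he₀, by simp [he₀ne.ne_empty]⟩
  obtain ⟨M, hME, hM, hgM⟩ := ih _ hE' (hE.mono hE'.subset) (hg.mono hE'.subset)
  have hN : ∑ e ∈ E with ¬Disjoint e e₀, g e ≤ d - 1 := by
    have := hg.sum_not_disjoint_add_le he₀ (hE e₀ he₀).1 he₀ne
    rw [hE.card_eq he₀] at this
    linarith
  have he₀M : e₀ ∉ M := fun h => he₀ne.ne_empty (by simpa using (mem_filter.1 (hME h)).2)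
  refine ⟨insert e₀ M, insert_subset he₀ (hME.trans hE'.subset), ?_, ?_⟩
  · rw [coe_insert]
    exact hM.insert_of_symm fun e he _ => (mem_filter.1 (hME he)).2.symm
  · calc ∑ e ∈ E, f e ≤ ∑ e ∈ E, g e := hfg
      _ = ∑ e ∈ E with Disjoint e e₀, g e + ∑ e ∈ E with ¬Disjoint e e₀, g e :=
        (sum_filter_add_sum_filter_not _ _ _).symm
      _ ≤ (d - 1) * #M + (d - 1) := add_le_add hgM hN
      _ = (d - 1) * #(insert e₀ M) := by rw [card_insert_of_notMem he₀M]; push_cast; ring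

end Partite

end FinsetHypergraph

/-- Füredi's theorem for `d`-partite hypergraphs: `ν(H) ≥ ν*(H) / (d - 1)`. -/
theorem furedi_partite {α : Type*} [DecidableEq α]
    (V : Finset α) (E : Finset (Finset α)) (d : ℕ) (hd : 2 ≤ d)
    (c : α → Fin d)
    (hE : ∀ e ∈ E, e ⊆ V ∧ ∀ j : Fin d, (e.filter (fun v => c v = j)).card = 1)
    (f : Finset α → ℝ) (hf0 : ∀ e ∈ E, 0 ≤ f e)
    (hfm : ∀ v ∈ V, ∑ e ∈ E.filter (fun e => v ∈ e), f e ≤ 1) :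
    ∃ M : Finset (Finset α), M ⊆ E ∧
      (↑M : Set (Finset α)).Pairwise (fun a b => Disjoint a b) ∧
      (∑ e ∈ E, f e) / ((d : ℝ) - 1) ≤ M.card := by
  obtain ⟨M, hME, hM, hfM⟩ := FinsetHypergraph.IsPartite.exists_matching hE hd ⟨hf0, hfm⟩
  refine ⟨M, hME, hM, ?_⟩
  rw [div_le_iff₀ (by linarith [show (2 : ℝ) ≤ d by exact_mod_cast hd])]
  linarith
end

section
/- Let $X$ be a convex triangulation of a polytope $P$ and let $v_1 v_2$ be an edge of $X$ with barycenter $b = (v_1+v_2)/2$. Then replacing each face $\mathrm{conv}\{v_1,v_2,u_3,\dots,u_j\}$ of $X$ containing the edge $v_1v_2$ by the two faces $\mathrm{conv}\{b,v_2,u_3,\dots,u_j\}$ and $\mathrm{conv}\{b,v_1,u_3,\dots,u_j\}$ (keeping all faces not containing $v_1v_2$) yields a convex triangulation of $P$ with vertex set $V(X) \cup \{b\}$. -/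
/-!
The midpoint `b` of the edge `{v₁, v₂}` cuts each face `s ⊇ {v₁, v₂}` into the simplices
`insert b (s.erase v₁)` and `insert b (s.erase v₂)`. Transporting barycentric weights from such a
half to `s` by sharing the weight of `b` equally between `v₁` and `v₂` shows that the halves are
the regions `λ v₁ ≤ λ v₂` and `λ v₂ ≤ λ v₁` of `conv s`, where `λ` are the barycentric
coordinates on `s`: they are affinely independent, cover `conv s` and meet along
`insert b (s \ {v₁, v₂})`. Any two new simplices lie in faces `s`, `s'` of `X`, so their
intersection lies in `conv (s ∩ s')`; uniqueness of barycentric coordinates on `s` then confines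
it to the convex hull of their common vertices.
-/

open Set Geometry Finset

theorem Finset.pair_subset_iff {α : Type*} [DecidableEq α] {a b : α} {s : Finset α} :
    ({a, b} : Finset α) ⊆ s ↔ a ∈ s ∧ b ∈ s := by
  simp [Finset.insert_subset_iff]

section

variable {𝕜 E : Type*} [Field 𝕜] [AddCommGroup E] [Module 𝕜 E] {s t : Finset E} {x : E}
  {w : E → 𝕜}

theorem affineIndependent_of_forall_sum_eq_zero
    (h : ∀ w : E → 𝕜, ∑ u ∈ s, w u = 0 → ∑ u ∈ s, w u • u = 0 → ∀ u ∈ s, w u = 0) :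
    AffineIndependent 𝕜 ((↑) : s → E) := by
  by_contra hs
  obtain ⟨w, hw₁, hw₀, u, hu, hwu⟩ := exists_nontrivial_relation_sum_zero_of_not_affine_ind hs
  exact hwu (h w hw₀ hw₁ u hu)

variable [LinearOrder 𝕜] [IsStrictOrderedRing 𝕜]

theorem Finset.mem_convexHull_of_eq_zero_off (hts : t ⊆ s) (hw₀ : ∀ u ∈ s, 0 ≤ w u)
    (hw₁ : ∑ u ∈ s, w u = 1) (hwx : ∑ u ∈ s, w u • u = x) (hwt : ∀ u ∈ s, u ∉ t → w u = 0) :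
    x ∈ convexHull 𝕜 (t : Set E) := by
  refine Finset.mem_convexHull'.2 ⟨w, fun u hu => hw₀ u (hts hu), ?_, ?_⟩
  · rwa [Finset.sum_subset hts fun u hu hut => hwt u hu hut]
  · rwa [Finset.sum_subset hts fun u hu hut => by rw [hwt u hu hut, zero_smul]]

theorem half_smul_add_mem_convexHull {v₁ v₂ : E} {S : Set E} (hv₁ : v₁ ∈ S) (hv₂ : v₂ ∈ S) :
    (1 / 2 : 𝕜) • (v₁ + v₂) ∈ convexHull 𝕜 S := by
  rw [smul_add]
  exact convex_convexHull 𝕜 S (subset_convexHull 𝕜 S hv₁) (subset_convexHull 𝕜 S hv₂)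
    (by norm_num) (by norm_num) (by norm_num)

theorem AffineIndependent.eq_zero_of_mem_convexHull (hs : AffineIndependent 𝕜 ((↑) : s → E))
    (hts : t ⊆ s) (hx : x ∈ convexHull 𝕜 (t : Set E)) (hw₁ : ∑ u ∈ s, w u = 1)
    (hwx : ∑ u ∈ s, w u • u = x) : ∀ u ∈ s, u ∉ t → w u = 0 := by
  classical
  obtain ⟨p, -, hp₁, hpx⟩ := Finset.mem_convexHull'.1 hx
  have hw := hs.eq_of_sum_eq_sum_subtype (w₁ := w) (w₂ := fun u => if u ∈ t then p u else 0)
    (by rw [Finset.sum_ite_mem, Finset.inter_eq_right.2 hts, hp₁, hw₁])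
    (by simp only [ite_smul, zero_smul]
        rw [Finset.sum_ite_mem, Finset.inter_eq_right.2 hts, hpx, hwx])
  intro u hu hut
  simpa [hut] using hw u hu

theorem convexHull_inter_subset_of_subset {T T' : Finset E}
    (hT : AffineIndependent 𝕜 ((↑) : T → E)) (hT' : AffineIndependent 𝕜 ((↑) : T' → E))
    (htT : t ⊆ T) (hsT' : s ⊆ T')
    (hTT' : convexHull 𝕜 ↑T ∩ convexHull 𝕜 ↑T' ⊆ convexHull 𝕜 (↑T ∩ ↑T' : Set E)) :
    convexHull 𝕜 ↑t ∩ convexHull 𝕜 ↑s ⊆ convexHull 𝕜 (↑t ∩ ↑s : Set E) := by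
  classical
  rintro x ⟨hxt, hxs⟩
  have hx : x ∈ convexHull 𝕜 (↑(T ∩ T') : Set E) := by
    rw [Finset.coe_inter]
    exact hTT' ⟨convexHull_mono (Finset.coe_subset.2 htT) hxt,
      convexHull_mono (Finset.coe_subset.2 hsT') hxs⟩
  have hxtT' : x ∈ convexHull 𝕜 (↑(t ∩ T') : Set E) := by
    have h := hT.convexHull_inter htT (Finset.inter_subset_left (s₂ := T'))
    rw [← Finset.coe_inter, ← Finset.inter_assoc, Finset.inter_eq_left.2 htT] at h
    rw [h]
    exact ⟨hxt, hx⟩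
  have h := hT'.convexHull_inter (Finset.inter_subset_right (s₁ := t)) hsT'
  rw [← Finset.coe_inter, Finset.inter_assoc, Finset.inter_eq_right.2 hsT'] at h
  rw [← Finset.coe_inter, h]
  exact ⟨hxtT', hxs⟩

end

namespace Geometry.SimplicialComplex

variable {𝕜 E : Type*} [Field 𝕜] [LinearOrder 𝕜] [IsStrictOrderedRing 𝕜]
  [AddCommGroup E] [Module 𝕜 E]

def ofGenerators (G : Set (Finset E)) (indep : ∀ T ∈ G, AffineIndependent 𝕜 ((↑) : T → E))
    (inter_subset_convexHull : ∀ T ∈ G, ∀ T' ∈ G,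
      convexHull 𝕜 ↑T ∩ convexHull 𝕜 ↑T' ⊆ convexHull 𝕜 (↑T ∩ ↑T' : Set E)) :
    SimplicialComplex 𝕜 E :=
  ofErase {t | ∃ T ∈ G, t ⊆ T}
    (fun _ ⟨T, hT, htT⟩ => (indep T hT).mono (Finset.coe_subset.2 htT))
    (fun _ _ hts ⟨T, hT, hsT⟩ => ⟨T, hT, hts.trans hsT⟩)
    (fun _ ⟨T, hT, htT⟩ _ ⟨T', hT', hsT'⟩ => convexHull_inter_subset_of_subset (indep T hT)
      (indep T' hT') htT hsT' (inter_subset_convexHull T hT T' hT'))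

variable {G : Set (Finset E)} {indep : ∀ T ∈ G, AffineIndependent 𝕜 ((↑) : T → E)}
  {inter_subset_convexHull : ∀ T ∈ G, ∀ T' ∈ G,
      convexHull 𝕜 ↑T ∩ convexHull 𝕜 ↑T' ⊆ convexHull 𝕜 (↑T ∩ ↑T' : Set E)}

theorem mem_faces_ofGenerators {t : Finset E} :
    t ∈ (ofGenerators G indep inter_subset_convexHull).faces ↔ t.Nonempty ∧ ∃ T ∈ G, t ⊆ T := by
  simp [ofGenerators, and_comm, Finset.nonempty_iff_ne_empty]

theorem space_ofGenerators :
    (ofGenerators G indep inter_subset_convexHull).space = ⋃ T ∈ G, convexHull 𝕜 (T : Set E) := by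
  ext x
  simp only [mem_space_iff, mem_faces_ofGenerators, Set.mem_iUnion, exists_prop]
  constructor
  · rintro ⟨t, ⟨-, T, hT, htT⟩, hx⟩
    exact ⟨T, hT, convexHull_mono (Finset.coe_subset.2 htT) hx⟩
  · rintro ⟨T, hT, hx⟩
    exact ⟨T, ⟨(convexHull_nonempty_iff.1 ⟨x, hx⟩), T, hT, subset_rfl⟩, hx⟩

theorem vertices_ofGenerators :
    (ofGenerators G indep inter_subset_convexHull).vertices = ⋃ T ∈ G, (T : Set E) := by
  ext x
  simp [mem_vertices, mem_faces_ofGenerators]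

end Geometry.SimplicialComplex

section MidpointSplit

variable {𝕜 E : Type*} [Field 𝕜] [DecidableEq E] {s r : Finset E} {v₁ v₂ b x : E}

/-- Barycentric weights on `insert b (s.erase v₁)` transported to `s`. -/
def splitWeights (v₁ v₂ b : E) (w : E → 𝕜) (u : E) : 𝕜 :=
  if u = v₁ then w b / 2 else if u = v₂ then w v₂ + w b / 2 else w u

theorem sum_splitWeights_smul {M : Type*} [AddCommGroup M] [Module 𝕜 M] (hne : v₁ ≠ v₂)
    (hv₁ : v₁ ∈ s) (hv₂ : v₂ ∈ s) (hbs : b ∉ s) (w : E → 𝕜) (f : E → M)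
    (hf : f b = (1 / 2 : 𝕜) • (f v₁ + f v₂)) :
    ∑ u ∈ s, splitWeights v₁ v₂ b w u • f u = ∑ u ∈ insert b (s.erase v₁), w u • f u := by
  have hv₂' : v₂ ∈ s.erase v₁ := Finset.mem_erase.2 ⟨hne.symm, hv₂⟩
  have hrest : ∑ u ∈ (s.erase v₁).erase v₂, splitWeights v₁ v₂ b w u • f u =
      ∑ u ∈ (s.erase v₁).erase v₂, w u • f u :=
    Finset.sum_congr rfl fun u hu => by
      rw [splitWeights, if_neg (Finset.ne_of_mem_erase (Finset.mem_of_mem_erase hu)),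
        if_neg (Finset.ne_of_mem_erase hu)]
  rw [Finset.sum_insert (fun h => hbs (Finset.mem_of_mem_erase h)),
    ← Finset.add_sum_erase _ _ hv₁, ← Finset.add_sum_erase _ _ hv₂',
    ← Finset.add_sum_erase _ _ hv₂', hrest]
  simp only [splitWeights, ↓reduceIte, if_neg hne.symm, hf]
  module

theorem sum_splitWeights [NeZero (2 : 𝕜)] (hne : v₁ ≠ v₂) (hv₁ : v₁ ∈ s) (hv₂ : v₂ ∈ s)
    (hbs : b ∉ s) (w : E → 𝕜) :
    ∑ u ∈ s, splitWeights v₁ v₂ b w u = ∑ u ∈ insert b (s.erase v₁), w u := by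
  simpa using sum_splitWeights_smul hne hv₁ hv₂ hbs w (fun _ => (1 : 𝕜))
    (by rw [one_add_one_eq_two, smul_eq_mul, one_div, inv_mul_cancel₀ two_ne_zero])

variable [AddCommGroup E] [Module 𝕜 E]

theorem sum_splitWeights_smul_self (hne : v₁ ≠ v₂) (hb : b = (1 / 2 : 𝕜) • (v₁ + v₂))
    (hv₁ : v₁ ∈ s) (hv₂ : v₂ ∈ s) (hbs : b ∉ s) (w : E → 𝕜) :
    ∑ u ∈ s, splitWeights v₁ v₂ b w u • u = ∑ u ∈ insert b (s.erase v₁), w u • u :=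
  sum_splitWeights_smul hne hv₁ hv₂ hbs w id hb

variable [LinearOrder 𝕜] [IsStrictOrderedRing 𝕜]

theorem mem_convexHull_insert_erase_iff (hne : v₁ ≠ v₂) (hb : b = (1 / 2 : 𝕜) • (v₁ + v₂))
    (hv₁ : v₁ ∈ s) (hv₂ : v₂ ∈ s) (hbs : b ∉ s) :
    x ∈ convexHull 𝕜 (↑(insert b (s.erase v₁)) : Set E) ↔
      ∃ w : E → 𝕜, (∀ u ∈ s, 0 ≤ w u) ∧ ∑ u ∈ s, w u = 1 ∧ ∑ u ∈ s, w u • u = x ∧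
        w v₁ ≤ w v₂ := by
  constructor
  · intro hx
    obtain ⟨w, hw₀, hw₁, hwx⟩ := Finset.mem_convexHull'.1 hx
    have hwb : 0 ≤ w b := hw₀ b (Finset.mem_insert_self _ _)
    have hwv₂ : 0 ≤ w v₂ := hw₀ v₂ (Finset.mem_insert_of_mem (Finset.mem_erase.2 ⟨hne.symm, hv₂⟩))
    refine ⟨splitWeights v₁ v₂ b w, fun u hu => ?_,
      (sum_splitWeights hne hv₁ hv₂ hbs w).trans hw₁,
      (sum_splitWeights_smul_self hne hb hv₁ hv₂ hbs w).trans hwx, ?_⟩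
    · unfold splitWeights
      split_ifs with h₁
      · positivity
      · positivity
      · exact hw₀ u (Finset.mem_insert_of_mem (Finset.mem_erase.2 ⟨h₁, hu⟩))
    · simp only [splitWeights, ↓reduceIte, if_neg hne.symm]
      linarith
  · rintro ⟨Q, hQ₀, hQ₁, hQx, hQle⟩
    set w : E → 𝕜 := fun u => if u = b then 2 * Q v₁ else if u = v₂ then Q v₂ - Q v₁ else Q u
    have hsplit : ∀ u ∈ s, splitWeights v₁ v₂ b w u = Q u := by
      intro u hu
      have hub : u ≠ b := fun h => hbs (h ▸ hu)
      simp only [splitWeights, w, if_pos rfl, if_neg hub, if_neg (ne_of_mem_of_not_mem hv₂ hbs)]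
      split_ifs with h₁ h₂ <;> subst_vars <;> ring
    refine Finset.mem_convexHull'.2 ⟨w, fun u hu => ?_, ?_, ?_⟩
    · have hQv₁ := hQ₀ v₁ hv₁
      simp only [w]
      split_ifs with h₁ h₂
      · positivity
      · linarith
      · exact hQ₀ u (Finset.mem_of_mem_erase ((Finset.mem_insert.1 hu).resolve_left h₁))
    · rw [← sum_splitWeights hne hv₁ hv₂ hbs, Finset.sum_congr rfl hsplit, hQ₁]
    · rw [← sum_splitWeights_smul_self hne hb hv₁ hv₂ hbs,
        Finset.sum_congr rfl fun u hu => by rw [hsplit u hu], hQx]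

theorem affineIndependent_insert_erase (hne : v₁ ≠ v₂) (hb : b = (1 / 2 : 𝕜) • (v₁ + v₂))
    (hs : AffineIndependent 𝕜 ((↑) : s → E)) (hv₁ : v₁ ∈ s) (hv₂ : v₂ ∈ s) (hbs : b ∉ s) :
    AffineIndependent 𝕜 ((↑) : (insert b (s.erase v₁) : Finset E) → E) := by
  refine affineIndependent_of_forall_sum_eq_zero fun w hw₀ hw₁ => ?_
  have hz := hs.eq_zero_of_sum_eq_zero_subtype (w := splitWeights v₁ v₂ b w)
    (by rw [sum_splitWeights hne hv₁ hv₂ hbs, hw₀])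
    (by rw [sum_splitWeights_smul_self hne hb hv₁ hv₂ hbs, hw₁])
  have hwb : w b = 0 := by simpa [splitWeights] using hz v₁ hv₁
  intro u hu
  rcases Finset.mem_insert.1 hu with rfl | hu
  · exact hwb
  · have h := hz u (Finset.mem_of_mem_erase hu)
    simp only [splitWeights, if_neg (Finset.ne_of_mem_erase hu), hwb] at h
    split_ifs at h with h₂
    · subst h₂; simpa using h
    · exact h

theorem convexHull_insert_erase_subset (hb : b = (1 / 2 : 𝕜) • (v₁ + v₂)) (hv₁ : v₁ ∈ s)
    (hv₂ : v₂ ∈ s) :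
    convexHull 𝕜 (↑(insert b (s.erase v₁)) : Set E) ⊆ convexHull 𝕜 ↑s := by
  refine convexHull_min ?_ (convex_convexHull 𝕜 _)
  rw [Finset.coe_insert, Set.insert_subset_iff]
  refine ⟨?_, (Finset.coe_subset.2 (Finset.erase_subset _ _)).trans (subset_convexHull 𝕜 _)⟩
  exact hb ▸ half_smul_add_mem_convexHull hv₁ hv₂

theorem convexHull_subset_union_insert_erase (hne : v₁ ≠ v₂)
    (hb : b = (1 / 2 : 𝕜) • (v₁ + v₂)) (hv₁ : v₁ ∈ s) (hv₂ : v₂ ∈ s) (hbs : b ∉ s) :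
    convexHull 𝕜 (↑s : Set E) ⊆
      convexHull 𝕜 ↑(insert b (s.erase v₁)) ∪ convexHull 𝕜 ↑(insert b (s.erase v₂)) := by
  intro x hx
  obtain ⟨w, hw₀, hw₁, hwx⟩ := Finset.mem_convexHull'.1 hx
  rcases le_total (w v₁) (w v₂) with h | h
  · exact Or.inl ((mem_convexHull_insert_erase_iff hne hb hv₁ hv₂ hbs).2 ⟨w, hw₀, hw₁, hwx, h⟩)
  · refine Or.inr ((mem_convexHull_insert_erase_iff hne.symm ?_ hv₂ hv₁ hbs).2
      ⟨w, hw₀, hw₁, hwx, h⟩)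
    rw [hb, add_comm]

theorem convexHull_inter_convexHull_insert_erase_subset_erase (hne : v₁ ≠ v₂)
    (hb : b = (1 / 2 : 𝕜) • (v₁ + v₂)) (hs : AffineIndependent 𝕜 ((↑) : s → E))
    (hv₁ : v₁ ∈ s) (hv₂ : v₂ ∈ s) (hbs : b ∉ s) (hrs : r ⊆ s) (hr : ¬(v₁ ∈ r ∧ v₂ ∈ r)) :
    convexHull 𝕜 ↑r ∩ convexHull 𝕜 ↑(insert b (s.erase v₁)) ⊆
      convexHull 𝕜 (↑(r.erase v₁) : Set E) := by
  rintro x ⟨hxr, hx⟩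
  obtain ⟨w, hw₀, hw₁, hwx, hwle⟩ := (mem_convexHull_insert_erase_iff hne hb hv₁ hv₂ hbs).1 hx
  have hwr := hs.eq_zero_of_mem_convexHull hrs hxr hw₁ hwx
  have hwv₁ : w v₁ = 0 := by
    by_cases hv₁r : v₁ ∈ r
    · have := hwr v₂ hv₂ fun hv₂r => hr ⟨hv₁r, hv₂r⟩
      linarith [hw₀ v₁ hv₁]
    · exact hwr v₁ hv₁ hv₁r
  refine Finset.mem_convexHull_of_eq_zero_off ((Finset.erase_subset _ _).trans hrs) hw₀ hw₁ hwx
    fun u hu hur => ?_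
  by_cases huv₁ : u = v₁
  · rwa [huv₁]
  · exact hwr u hu fun h => hur (Finset.mem_erase.2 ⟨huv₁, h⟩)

theorem convexHull_inter_convexHull_insert_erase_subset_insert_erase (hne : v₁ ≠ v₂)
    (hb : b = (1 / 2 : 𝕜) • (v₁ + v₂)) (hs : AffineIndependent 𝕜 ((↑) : s → E))
    (hv₁ : v₁ ∈ s) (hv₂ : v₂ ∈ s) (hbs : b ∉ s) (hrs : r ⊆ s) (hv₁r : v₁ ∈ r) (hv₂r : v₂ ∈ r) :
    convexHull 𝕜 ↑r ∩ convexHull 𝕜 ↑(insert b (s.erase v₁)) ⊆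
      convexHull 𝕜 (↑(insert b (r.erase v₁)) : Set E) := by
  rintro x ⟨hxr, hx⟩
  obtain ⟨w, hw₀, hw₁, hwx, hwle⟩ := (mem_convexHull_insert_erase_iff hne hb hv₁ hv₂ hbs).1 hx
  have hwr := hs.eq_zero_of_mem_convexHull hrs hxr hw₁ hwx
  refine (mem_convexHull_insert_erase_iff hne hb hv₁r hv₂r fun h => hbs (hrs h)).2
    ⟨w, fun u hu => hw₀ u (hrs hu), ?_, ?_, hwle⟩
  · rwa [Finset.sum_subset hrs fun u hu hur => hwr u hu hur]
  · rwa [Finset.sum_subset hrs fun u hu hur => by rw [hwr u hu hur, zero_smul]]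

theorem convexHull_insert_erase_inter_subset (hne : v₁ ≠ v₂)
    (hb : b = (1 / 2 : 𝕜) • (v₁ + v₂)) (hs : AffineIndependent 𝕜 ((↑) : s → E))
    (hv₁ : v₁ ∈ s) (hv₂ : v₂ ∈ s) (hbs : b ∉ s) :
    convexHull 𝕜 ↑(insert b (s.erase v₁)) ∩ convexHull 𝕜 ↑(insert b (s.erase v₂)) ⊆
      convexHull 𝕜 (↑(insert b ((s.erase v₁).erase v₂)) : Set E) := by
  rintro x ⟨hx₁, hx₂⟩
  obtain ⟨w, hw₀, hw₁, hwx⟩ := Finset.mem_convexHull'.1 hx₁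
  obtain ⟨Q, -, hQ₁, hQx, hQle⟩ :=
    (mem_convexHull_insert_erase_iff hne.symm (by rw [hb, add_comm]) hv₂ hv₁ hbs).1 hx₂
  have hwQ := hs.eq_of_sum_eq_sum_subtype (w₁ := splitWeights v₁ v₂ b w) (w₂ := Q)
    (by rw [sum_splitWeights hne hv₁ hv₂ hbs, hw₁, hQ₁])
    (by rw [sum_splitWeights_smul_self hne hb hv₁ hv₂ hbs, hwx, hQx])
  have hwv₂ : w v₂ = 0 := by
    have h₁ := hwQ v₁ hv₁
    have h₂ := hwQ v₂ hv₂
    simp only [splitWeights, ↓reduceIte, if_neg hne.symm] at h₁ h₂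
    linarith [hw₀ v₂ (Finset.mem_insert_of_mem (Finset.mem_erase.2 ⟨hne.symm, hv₂⟩))]
  rw [← Finset.erase_insert_of_ne (ne_of_mem_of_not_mem hv₂ hbs).symm]
  refine Finset.mem_convexHull_of_eq_zero_off (Finset.erase_subset _ _) hw₀ hw₁ hwx
    fun u hu hur => ?_
  obtain rfl : u = v₂ := by_contra fun h => hur (Finset.mem_erase.2 ⟨h, hu⟩)
  exact hwv₂

end MidpointSplit

namespace Geometry.SimplicialComplex

section

variable {𝕜 E : Type*} [Ring 𝕜] [PartialOrder 𝕜] [AddCommGroup E] [Module 𝕜 E] [DecidableEq E]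
  {X : SimplicialComplex 𝕜 E} {v₁ v₂ b : E}

variable (X v₁ v₂ b) in
def halfFaces : Set (Finset E) :=
  {T | ∃ s ∈ X.faces, ({v₁, v₂} : Finset E) ⊆ s ∧ T = insert b (s.erase v₁)}

variable (X v₁ v₂ b) in
def stellarGenerators : Set (Finset E) :=
  {t | t ∈ X.faces ∧ ¬({v₁, v₂} : Finset E) ⊆ t} ∪ halfFaces X v₁ v₂ b ∪ halfFaces X v₂ v₁ b

theorem iUnion_stellarGenerators (hne : v₁ ≠ v₂) (hedge : {v₁, v₂} ∈ X.faces) :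
    ⋃ T ∈ stellarGenerators X v₁ v₂ b, (T : Set E) = X.vertices ∪ {b} := by
  ext x
  simp only [Set.mem_iUnion, Finset.mem_coe, exists_prop, Set.mem_union, Set.mem_singleton_iff]
  constructor
  · rintro ⟨T, (⟨hT, -⟩ | ⟨s, hs, -, rfl⟩) | ⟨s, hs, -, rfl⟩, hxT⟩
    · exact Or.inl
        (X.down_closed hT (Finset.singleton_subset_iff.2 hxT) (Finset.singleton_nonempty x))
    all_goals
      rcases Finset.mem_insert.1 hxT with rfl | hxs
      · exact Or.inr rfl
      · exact Or.inl (X.down_closed hs (Finset.singleton_subset_iff.2 (Finset.mem_of_mem_erase hxs))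
          (Finset.singleton_nonempty x))
  · rintro (hx | rfl)
    · refine ⟨{x}, Or.inl (Or.inl ⟨hx, fun h => hne ?_⟩), Finset.mem_singleton_self x⟩
      obtain ⟨h₁, h₂⟩ := Finset.pair_subset_iff.1 h
      exact (Finset.mem_singleton.1 h₁).trans (Finset.mem_singleton.1 h₂).symm
    · exact ⟨_, Or.inl (Or.inr ⟨_, hedge, subset_rfl, rfl⟩), Finset.mem_insert_self _ _⟩

end

variable {𝕜 E : Type*} [Field 𝕜] [LinearOrder 𝕜] [IsStrictOrderedRing 𝕜]
  [AddCommGroup E] [Module 𝕜 E] [DecidableEq E] {X : SimplicialComplex 𝕜 E}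
  {v₁ v₂ b : E} {s t T T' : Finset E}

theorem notMem_of_mem_faces_of_edge (hne : v₁ ≠ v₂) (hedge : {v₁, v₂} ∈ X.faces)
    (hb : b = (1 / 2 : 𝕜) • (v₁ + v₂)) (hs : s ∈ X.faces) : b ∉ s := by
  intro hbs
  have hbv : b ∈ X.vertices :=
    X.down_closed hs (Finset.singleton_subset_iff.2 hbs) (Finset.singleton_nonempty _)
  have hb₂ : (2 : 𝕜) • b = v₁ + v₂ := by rw [hb, smul_smul]; norm_num
  have hbe := (vertex_mem_convexHull_iff hbv hedge).1 <| by
    rw [hb]; exact half_smul_add_mem_convexHull (by simp) (by simp)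
  rcases Finset.mem_insert.1 hbe with rfl | hbe
  · rw [two_smul] at hb₂
    exact hne (add_left_cancel hb₂)
  · rw [Finset.mem_singleton.1 hbe, two_smul] at hb₂
    exact hne (add_right_cancel hb₂).symm

theorem inter_subset_convexHull_face_halfFace (hne : v₁ ≠ v₂)
    (hb : b = (1 / 2 : 𝕜) • (v₁ + v₂)) (hbX : ∀ s ∈ X.faces, b ∉ s) (ht : t ∈ X.faces)
    (hte : ¬({v₁, v₂} : Finset E) ⊆ t) (hT : T ∈ halfFaces X v₁ v₂ b) :
    convexHull 𝕜 ↑t ∩ convexHull 𝕜 ↑T ⊆ convexHull 𝕜 (↑t ∩ ↑T : Set E) := by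
  obtain ⟨s, hs, hes, rfl⟩ := hT
  obtain ⟨hv₁, hv₂⟩ := Finset.pair_subset_iff.1 hes
  rintro x ⟨hxt, hxT⟩
  have hxts : x ∈ convexHull 𝕜 (↑(t ∩ s) : Set E) := by
    rw [Finset.coe_inter]
    exact X.inter_subset_convexHull ht hs ⟨hxt, convexHull_insert_erase_subset hb hv₁ hv₂ hxT⟩
  refine convexHull_mono ?_ <| convexHull_inter_convexHull_insert_erase_subset_erase hne hb
    (X.indep hs) hv₁ hv₂ (hbX s hs) Finset.inter_subset_right
    (fun h => hte (Finset.pair_subset_iff.2 ⟨(Finset.mem_inter.1 h.1).1,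
      (Finset.mem_inter.1 h.2).1⟩)) ⟨hxts, hxT⟩
  rw [← Finset.coe_inter, Finset.coe_subset]
  intro u hu
  simp only [Finset.mem_erase, Finset.mem_inter, Finset.mem_insert] at hu ⊢
  tauto

theorem inter_subset_convexHull_halfFace_halfFace (hne : v₁ ≠ v₂)
    (hb : b = (1 / 2 : 𝕜) • (v₁ + v₂)) (hbX : ∀ s ∈ X.faces, b ∉ s)
    (hT : T ∈ halfFaces X v₁ v₂ b) (hT' : T' ∈ halfFaces X v₁ v₂ b) :
    convexHull 𝕜 ↑T ∩ convexHull 𝕜 ↑T' ⊆ convexHull 𝕜 (↑T ∩ ↑T' : Set E) := by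
  obtain ⟨s, hs, hes, rfl⟩ := hT
  obtain ⟨s', hs', hes', rfl⟩ := hT'
  obtain ⟨hv₁, hv₂⟩ := Finset.pair_subset_iff.1 hes
  obtain ⟨hv₁', hv₂'⟩ := Finset.pair_subset_iff.1 hes'
  rintro x ⟨hxT, hxT'⟩
  have hxss' : x ∈ convexHull 𝕜 (↑(s ∩ s') : Set E) := by
    rw [Finset.coe_inter]
    exact X.inter_subset_convexHull hs hs' ⟨convexHull_insert_erase_subset hb hv₁ hv₂ hxT,
      convexHull_insert_erase_subset hb hv₁' hv₂' hxT'⟩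
  refine convexHull_mono ?_ <| convexHull_inter_convexHull_insert_erase_subset_insert_erase hne
    hb (X.indep hs) hv₁ hv₂ (hbX s hs) Finset.inter_subset_left (Finset.mem_inter.2 ⟨hv₁, hv₁'⟩)
    (Finset.mem_inter.2 ⟨hv₂, hv₂'⟩) ⟨hxss', hxT⟩
  rw [← Finset.coe_inter, Finset.coe_subset]
  intro u hu
  simp only [Finset.mem_erase, Finset.mem_inter, Finset.mem_insert] at hu ⊢
  tauto

theorem inter_subset_convexHull_halfFace_halfFace_swap (hne : v₁ ≠ v₂)
    (hb : b = (1 / 2 : 𝕜) • (v₁ + v₂)) (hbX : ∀ s ∈ X.faces, b ∉ s)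
    (hT : T ∈ halfFaces X v₁ v₂ b) (hT' : T' ∈ halfFaces X v₂ v₁ b) :
    convexHull 𝕜 ↑T ∩ convexHull 𝕜 ↑T' ⊆ convexHull 𝕜 (↑T ∩ ↑T' : Set E) := by
  obtain ⟨s, hs, hes, rfl⟩ := hT
  obtain ⟨s', hs', hes', rfl⟩ := hT'
  obtain ⟨hv₁, hv₂⟩ := Finset.pair_subset_iff.1 hes
  obtain ⟨hv₂', hv₁'⟩ := Finset.pair_subset_iff.1 hes'
  have hb' : b = (1 / 2 : 𝕜) • (v₂ + v₁) := by rw [hb, add_comm]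
  have hv₁r : v₁ ∈ s ∩ s' := Finset.mem_inter.2 ⟨hv₁, hv₁'⟩
  have hv₂r : v₂ ∈ s ∩ s' := Finset.mem_inter.2 ⟨hv₂, hv₂'⟩
  rintro x ⟨hxT, hxT'⟩
  have hxss' : x ∈ convexHull 𝕜 (↑(s ∩ s') : Set E) := by
    rw [Finset.coe_inter]
    exact X.inter_subset_convexHull hs hs' ⟨convexHull_insert_erase_subset hb hv₁ hv₂ hxT,
      convexHull_insert_erase_subset hb' hv₂' hv₁' hxT'⟩
  have hx₁ := convexHull_inter_convexHull_insert_erase_subset_insert_erase hne hb (X.indep hs)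
    hv₁ hv₂ (hbX s hs) Finset.inter_subset_left hv₁r hv₂r ⟨hxss', hxT⟩
  have hx₂ := convexHull_inter_convexHull_insert_erase_subset_insert_erase hne.symm hb'
    (X.indep hs') hv₂' hv₁' (hbX s' hs') Finset.inter_subset_right hv₂r hv₁r ⟨hxss', hxT'⟩
  refine convexHull_mono ?_ <| convexHull_insert_erase_inter_subset hne hb
    ((X.indep hs).mono (Finset.coe_subset.2 Finset.inter_subset_left)) hv₁r hv₂r
    (fun h => hbX s hs (Finset.mem_inter.1 h).1) ⟨hx₁, hx₂⟩
  rw [← Finset.coe_inter, Finset.coe_subset]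
  intro u hu
  simp only [Finset.mem_erase, Finset.mem_inter, Finset.mem_insert] at hu ⊢
  tauto

theorem inter_subset_convexHull_of_mem_stellarGenerators (hne : v₁ ≠ v₂)
    (hb : b = (1 / 2 : 𝕜) • (v₁ + v₂)) (hbX : ∀ s ∈ X.faces, b ∉ s)
    (hT : T ∈ stellarGenerators X v₁ v₂ b) (hT' : T' ∈ stellarGenerators X v₁ v₂ b) :
    convexHull 𝕜 ↑T ∩ convexHull 𝕜 ↑T' ⊆ convexHull 𝕜 (↑T ∩ ↑T' : Set E) := by
  have hb' : b = (1 / 2 : 𝕜) • (v₂ + v₁) := by rw [hb, add_comm]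
  have symm {A B : Finset E}
      (h : convexHull 𝕜 ↑A ∩ convexHull 𝕜 ↑B ⊆ convexHull 𝕜 (↑A ∩ ↑B : Set E)) :
      convexHull 𝕜 ↑B ∩ convexHull 𝕜 ↑A ⊆ convexHull 𝕜 (↑B ∩ ↑A : Set E) := by
    rwa [Set.inter_comm, Set.inter_comm (B : Set E)]
  rcases hT with (⟨hT, hTe⟩ | hT) | hT <;> rcases hT' with (⟨hT', hTe'⟩ | hT') | hT'
  · exact X.inter_subset_convexHull hT hT'
  · exact inter_subset_convexHull_face_halfFace hne hb hbX hT hTe hT'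
  · exact inter_subset_convexHull_face_halfFace hne.symm hb' hbX hT
      (Finset.pair_comm v₁ v₂ ▸ hTe) hT'
  · exact symm (inter_subset_convexHull_face_halfFace hne hb hbX hT' hTe' hT)
  · exact inter_subset_convexHull_halfFace_halfFace hne hb hbX hT hT'
  · exact inter_subset_convexHull_halfFace_halfFace_swap hne hb hbX hT hT'
  · exact symm (inter_subset_convexHull_face_halfFace hne.symm hb' hbX hT'
      (Finset.pair_comm v₁ v₂ ▸ hTe') hT)
  · exact inter_subset_convexHull_halfFace_halfFace_swap hne.symm hb' hbX hT hT'
  · exact inter_subset_convexHull_halfFace_halfFace hne.symm hb' hbX hT hT'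

theorem affineIndependent_of_mem_stellarGenerators (hne : v₁ ≠ v₂)
    (hb : b = (1 / 2 : 𝕜) • (v₁ + v₂)) (hbX : ∀ s ∈ X.faces, b ∉ s)
    (hT : T ∈ stellarGenerators X v₁ v₂ b) : AffineIndependent 𝕜 ((↑) : T → E) := by
  rcases hT with (⟨hT, -⟩ | ⟨s, hs, hes, rfl⟩) | ⟨s, hs, hes, rfl⟩
  · exact X.indep hT
  · exact affineIndependent_insert_erase hne hb (X.indep hs) (Finset.pair_subset_iff.1 hes).1
      (Finset.pair_subset_iff.1 hes).2 (hbX s hs)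
  · exact affineIndependent_insert_erase hne.symm (by rw [hb, add_comm]) (X.indep hs)
      (Finset.pair_subset_iff.1 hes).1 (Finset.pair_subset_iff.1 hes).2 (hbX s hs)

theorem iUnion_convexHull_stellarGenerators (hne : v₁ ≠ v₂)
    (hb : b = (1 / 2 : 𝕜) • (v₁ + v₂)) (hbX : ∀ s ∈ X.faces, b ∉ s) :
    ⋃ T ∈ stellarGenerators X v₁ v₂ b, convexHull 𝕜 (T : Set E) = X.space := by
  have hb' : b = (1 / 2 : 𝕜) • (v₂ + v₁) := by rw [hb, add_comm]
  refine Set.Subset.antisymm (Set.iUnion₂_subset fun T hT => ?_) fun x hx => ?_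
  · rcases hT with (⟨hT, -⟩ | ⟨s, hs, hes, rfl⟩) | ⟨s, hs, hes, rfl⟩
    · exact convexHull_subset_space hT
    · exact (convexHull_insert_erase_subset hb (Finset.pair_subset_iff.1 hes).1
        (Finset.pair_subset_iff.1 hes).2).trans (convexHull_subset_space hs)
    · exact (convexHull_insert_erase_subset hb' (Finset.pair_subset_iff.1 hes).1
        (Finset.pair_subset_iff.1 hes).2).trans (convexHull_subset_space hs)
  obtain ⟨s, hs, hxs⟩ := mem_space_iff.1 hx
  simp only [Set.mem_iUnion, exists_prop]
  by_cases hes : ({v₁, v₂} : Finset E) ⊆ s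
  · obtain ⟨hv₁, hv₂⟩ := Finset.pair_subset_iff.1 hes
    rcases convexHull_subset_union_insert_erase hne hb hv₁ hv₂ (hbX s hs) hxs with hx | hx
    · exact ⟨_, Or.inl (Or.inr ⟨s, hs, hes, rfl⟩), hx⟩
    · exact ⟨_, Or.inr ⟨s, hs, Finset.pair_comm v₁ v₂ ▸ hes, rfl⟩, hx⟩
  · exact ⟨s, Or.inl (Or.inl ⟨hs, hes⟩), hxs⟩

end Geometry.SimplicialComplex

theorem stellar_subdivision_general {E : Type*} [AddCommGroup E] [Module ℝ E] [DecidableEq E]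
    (X : SimplicialComplex ℝ E)
    (v₁ v₂ : E) (hne : v₁ ≠ v₂) (hedge : {v₁, v₂} ∈ X.faces)
    (b : E) (hb : b = (1 / 2 : ℝ) • (v₁ + v₂)) :
    ∃ X' : SimplicialComplex ℝ E,
      X'.space = X.space ∧
      X'.vertices = X.vertices ∪ {b} ∧
      (∀ s ∈ X.faces, ¬({v₁, v₂} ⊆ s) → s ∈ X'.faces) ∧
      (∀ s ∈ X.faces, {v₁, v₂} ⊆ s →
        insert b (s.erase v₁) ∈ X'.faces ∧ insert b (s.erase v₂) ∈ X'.faces) ∧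
      (∀ t ∈ X'.faces,
        (t ∈ X.faces ∧ ¬({v₁, v₂} ⊆ t)) ∨
        ∃ s ∈ X.faces, {v₁, v₂} ⊆ s ∧
          (t ⊆ insert b (s.erase v₁) ∨ t ⊆ insert b (s.erase v₂))) := by
  open SimplicialComplex in
  have hbX : ∀ s ∈ X.faces, b ∉ s := fun s => notMem_of_mem_faces_of_edge hne hedge hb
  refine ⟨ofGenerators (stellarGenerators X v₁ v₂ b)
    (fun T => affineIndependent_of_mem_stellarGenerators hne hb hbX)
    (fun T hT T' => inter_subset_convexHull_of_mem_stellarGenerators hne hb hbX hT),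
    by rw [space_ofGenerators, iUnion_convexHull_stellarGenerators hne hb hbX],
    by rw [vertices_ofGenerators, iUnion_stellarGenerators hne hedge],
    fun s hs hes => mem_faces_ofGenerators.2
      ⟨X.nonempty_of_mem_faces hs, s, Or.inl (Or.inl ⟨hs, hes⟩), subset_rfl⟩,
    fun s hs hes => ⟨mem_faces_ofGenerators.2 ⟨Finset.insert_nonempty _ _, _,
      Or.inl (Or.inr ⟨s, hs, hes, rfl⟩), subset_rfl⟩, mem_faces_ofGenerators.2
      ⟨Finset.insert_nonempty _ _, _, Or.inr ⟨s, hs, Finset.pair_comm v₁ v₂ ▸ hes, rfl⟩,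
        subset_rfl⟩⟩,
    fun t ht => ?_⟩
  obtain ⟨htne, T, hT, htT⟩ := mem_faces_ofGenerators.1 ht
  rcases hT with (⟨hT, hTe⟩ | ⟨s, hs, hes, rfl⟩) | ⟨s, hs, hes, rfl⟩
  · exact Or.inl ⟨X.down_closed hT htT htne, fun h => hTe (h.trans htT)⟩
  · exact Or.inr ⟨s, hs, hes, Or.inl htT⟩
  · exact Or.inr ⟨s, hs, Finset.pair_comm v₂ v₁ ▸ hes, Or.inr htT⟩

/-- Stellar subdivision of an edge of a convex triangulation of a polytope: subdividing
the edge `v₁v₂` at its barycenter `b` yields a convex triangulation of the same polytope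
whose vertex set is `V(X) ∪ {b}`; its faces are the old faces not containing the edge
`v₁v₂`, together with the faces obtained by replacing `v₁` (resp. `v₂`) by `b` in the
faces containing the edge (and the subfaces thereof). -/
theorem stellar_subdivision {E : Type*} [AddCommGroup E] [Module ℝ E] [DecidableEq E]
    (X : SimplicialComplex ℝ E)
    (W : Finset E) (hspace : X.space = convexHull ℝ ↑W)
    (v₁ v₂ : E) (hne : v₁ ≠ v₂) (hedge : {v₁, v₂} ∈ X.faces)
    (b : E) (hb : b = (1 / 2 : ℝ) • (v₁ + v₂)) :
    ∃ X' : SimplicialComplex ℝ E,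
      X'.space = X.space ∧
      X'.vertices = X.vertices ∪ {b} ∧
      (∀ s ∈ X.faces, ¬({v₁, v₂} ⊆ s) → s ∈ X'.faces) ∧
      (∀ s ∈ X.faces, {v₁, v₂} ⊆ s →
        insert b (s.erase v₁) ∈ X'.faces ∧ insert b (s.erase v₂) ∈ X'.faces) ∧
      (∀ t ∈ X'.faces,
        (t ∈ X.faces ∧ ¬({v₁, v₂} ⊆ t)) ∨
        ∃ s ∈ X.faces, {v₁, v₂} ⊆ s ∧
          (t ⊆ insert b (s.erase v₁) ∨ t ⊆ insert b (s.erase v₂))) :=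
  stellar_subdivision_general X v₁ v₂ hne hedge b hb
end
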